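/- Let B be a finite two-sided skew brace. Then for every prime p dividing |B|, there exists a subbrace S of B with |S| = p (Cauchy's theorem for two-sided skew braces). -/

import Mathlib

class SkewBrace (B : Type*) extends Group B, AddGroup B where
  one_eq_zero : (1 : B) = 0
  left_compat : ∀ a b c : B, a * (b + c) = a * b - a + a * c

class TwoSidedSkewBrace (B : Type*) extends SkewBrace B where
  right_compat : ∀ a b c : B, (b + c) * a = b * a - a + c * a

/-!
Take a subbrace `S` minimal among those whose order is divisible by `p`, and `x ∈ S` of
multiplicative order `p` (Cauchy's theorem for the group `(S, ·)`). Since `a ↦ λ_a`, with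
`λ_a b = -a + a * b`, is a homomorphism from `(B, ·)` to the additive endomorphisms of `B`, the map
`λ_x` satisfies `λ_x^[p] = id`, so `S` and its `λ_x`-fixed points have the same cardinality modulo
`p`. In a two-sided skew brace these fixed points, the `b` with `x * b = x + b`, form a subbrace;
by minimality they exhaust `S`. Hence `x * x ^ n = x + x ^ n` for all `n`, so the powers of `x`
are its multiples, and they form a subbrace of order `p`.
-/

open Function Set

theorem Set.MapsTo.card_inter_fixedPoints_modEq {α : Type*} [Finite α] {f : α → α} {s : Set α}
    (hs : MapsTo f s s) {p : ℕ} [Fact p.Prime] (hf : f^[p] = id) :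
    Nat.card s ≡ Nat.card ↥(s ∩ fixedPoints f) [MOD p] := by
  classical
  have := Fintype.ofFinite s
  let g : Function.End s := hs.restrict
  have hg : g ^ p ^ 1 = 1 := by
    funext x
    rw [pow_one]
    exact Subtype.ext ((hs.coe_iterate_restrict x p).trans (congrFun hf x))
  have := Equiv.Perm.card_fixedPoints_modEq hg
  rw [← Nat.card_eq_fintype_card, ← Nat.card_eq_fintype_card] at this
  convert this using 1
  exact Nat.card_congr
    ((Equiv.subtypeSubtypeEquivSubtypeInter (· ∈ s) (· ∈ fixedPoints f)).symm.trans
      (Equiv.subtypeEquivRight fun x => (Subtype.ext_iff (a1 := g x) (a2 := x)).symm))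

namespace SkewBrace

variable {B : Type*} [SkewBrace B]

theorem mul_zero (a : B) : a * 0 = a := by
  rw [← one_eq_zero, _root_.mul_one]

theorem mul_neg (a b : B) : a * -b = a + -(a * b) + a := by
  have h := left_compat a b (-b)
  rw [add_neg_cancel, mul_zero, sub_eq_add_neg] at h
  rw [← neg_add_cancel_left (a * b + -a) (a * -b), ← h]
  simp only [neg_add_rev, neg_neg, add_assoc]

def lambda : B →* AddMonoid.End B where
  toFun a := AddMonoidHom.mk' (fun b => -a + a * b) fun b c => by
    simp only [left_compat, sub_eq_add_neg, add_assoc]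
  map_one' := by
    ext b
    change -1 + 1 * b = b
    rw [_root_.one_mul, one_eq_zero, neg_zero, zero_add]
  map_mul' a b := by
    ext c
    change -(a * b) + a * b * c = -a + a * (-b + b * c)
    simp only [left_compat, mul_neg, _root_.mul_assoc, sub_eq_add_neg, add_assoc,
      neg_add_cancel_left, add_neg_cancel_left]

theorem lambda_apply (a b : B) : lambda a b = -a + a * b := rfl

theorem lambda_eq_self_iff {a b : B} : lambda a b = b ↔ a * b = a + b := by
  rw [lambda_apply, neg_add_eq_iff_eq_add]

theorem coe_zmultiples_eq_coe_zpowers {x : B}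
    (h : (Subgroup.zpowers x : Set B) ⊆ fixedPoints (lambda x)) :
    (AddSubgroup.zmultiples x : Set B) = Subgroup.zpowers x := by
  have hx : ∀ n : ℤ, x * x ^ n = x + x ^ n := fun n =>
    lambda_eq_self_iff.1 (h (Subgroup.zpow_mem_zpowers x n))
  have hpow : ∀ n : ℤ, x ^ n = n • x := by
    intro n
    induction n using Int.induction_on with
    | zero => rw [zpow_zero, zero_zsmul, one_eq_zero]
    | succ k ih => rw [add_comm, zpow_add, zpow_one, hx, ih, add_zsmul, one_zsmul]
    | pred k ih =>
      have hk := hx (-(k : ℤ) - 1)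
      rw [← zpow_one_add, show 1 + (-(k : ℤ) - 1) = -k by ring, ih] at hk
      rw [← neg_add_cancel_left x (x ^ (-(k : ℤ) - 1)), ← hk, ← neg_one_zsmul, ← add_zsmul]
      congr 1
      ring
  ext b
  simp only [SetLike.mem_coe, AddSubgroup.mem_zmultiples_iff, Subgroup.mem_zpowers_iff, hpow]

structure IsSubbrace (S : Set B) : Prop where
  zero_mem : (0 : B) ∈ S
  add_mem {a b : B} : a ∈ S → b ∈ S → a + b ∈ S
  neg_mem {a : B} : a ∈ S → -a ∈ S
  mul_mem {a b : B} : a ∈ S → b ∈ S → a * b ∈ S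
  inv_mem {a : B} : a ∈ S → a⁻¹ ∈ S

namespace IsSubbrace

theorem univ : IsSubbrace (Set.univ : Set B) :=
  ⟨trivial, fun _ _ => trivial, fun _ => trivial, fun _ _ => trivial, fun _ => trivial⟩

theorem inter {S T : Set B} (hS : IsSubbrace S) (hT : IsSubbrace T) : IsSubbrace (S ∩ T) :=
  ⟨⟨hS.zero_mem, hT.zero_mem⟩, fun ha hb => ⟨hS.add_mem ha.1 hb.1, hT.add_mem ha.2 hb.2⟩,
    fun ha => ⟨hS.neg_mem ha.1, hT.neg_mem ha.2⟩,
    fun ha hb => ⟨hS.mul_mem ha.1 hb.1, hT.mul_mem ha.2 hb.2⟩,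
    fun ha => ⟨hS.inv_mem ha.1, hT.inv_mem ha.2⟩⟩

variable {S : Set B}

def toSubgroup (hS : IsSubbrace S) : Subgroup B where
  carrier := S
  one_mem' := one_eq_zero (B := B) ▸ hS.zero_mem
  mul_mem' := hS.mul_mem
  inv_mem' := hS.inv_mem

theorem zpowers_subset (hS : IsSubbrace S) {x : B} (hx : x ∈ S) :
    (Subgroup.zpowers x : Set B) ⊆ S :=
  (Subgroup.zpowers_le (H := hS.toSubgroup)).2 hx

theorem mapsTo_lambda (hS : IsSubbrace S) {a : B} (ha : a ∈ S) : MapsTo (lambda a) S S :=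
  fun _ hb => hS.add_mem (hS.neg_mem ha) (hS.mul_mem ha hb)

theorem exists_prime_orderOf_dvd_card (hS : IsSubbrace S) [Finite S] {p : ℕ} [Fact p.Prime]
    (hp : p ∣ Nat.card S) :
    ∃ x ∈ S, orderOf x = p := by
  have : Finite hS.toSubgroup := ‹Finite S›
  obtain ⟨x, hx⟩ := exists_prime_orderOf_dvd_card' (G := hS.toSubgroup) p hp
  exact ⟨x, x.2, (Subgroup.orderOf_coe x).trans hx⟩

end IsSubbrace

end SkewBrace

namespace TwoSidedSkewBrace

open SkewBrace

variable {B : Type*} [TwoSidedSkewBrace B]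

theorem isSubbrace_fixedPoints_lambda (x : B) : IsSubbrace (fixedPoints (lambda x)) where
  zero_mem := map_zero (lambda x)
  add_mem {a b} ha hb := by
    simp only [mem_fixedPoints, IsFixedPt, map_add, ha.eq, hb.eq]
  neg_mem {a} ha := by
    simp only [mem_fixedPoints, IsFixedPt, map_neg, ha.eq]
  mul_mem {a b} ha hb := by
    have ha' : x * a = x + a := lambda_eq_self_iff.1 ha
    have hb' : x * b = x + b := lambda_eq_self_iff.1 hb
    refine lambda_eq_self_iff.2 ?_
    rw [← _root_.mul_assoc, ha', right_compat, hb', sub_eq_add_neg, add_neg_cancel_right]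
  inv_mem {a} ha := by
    have ha' : x * a = x + a := lambda_eq_self_iff.1 ha
    have h := right_compat a⁻¹ x a
    rw [← ha', mul_inv_cancel_right, mul_inv_cancel, one_eq_zero, add_zero, sub_eq_add_neg,
      eq_add_neg_iff_add_eq] at h
    exact lambda_eq_self_iff.2 h.symm

end TwoSidedSkewBrace

open SkewBrace TwoSidedSkewBrace

theorem twoSided_cauchy {B : Type*} [TwoSidedSkewBrace B] [Fintype B] :
    ∀ p : ℕ, p.Prime → p ∣ Nat.card B →
      ∃ (A : AddSubgroup B) (M : Subgroup B),
        (A : Set B) = (M : Set B) ∧ Nat.card A = p := by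
  intro p hp hdvd
  have := Fact.mk hp
  obtain ⟨S, ⟨hS, hpS⟩, hmin⟩ := exists_minimal_of_wellFoundedLT
    (fun S : Set B => IsSubbrace S ∧ p ∣ Nat.card S)
    ⟨Set.univ, IsSubbrace.univ, by rwa [Nat.card_univ]⟩
  obtain ⟨x, hxS, hx⟩ := hS.exists_prime_orderOf_dvd_card hpS
  have hpow : (lambda x)^[p] = id := by
    rw [← AddMonoid.End.coe_pow, ← map_pow, ← hx, pow_orderOf_eq_one, map_one]
    rfl
  have hfix : S ⊆ fixedPoints (lambda x) := by
    have hcard := (hS.mapsTo_lambda hxS).card_inter_fixedPoints_modEq hpow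
    exact (hmin ⟨hS.inter (isSubbrace_fixedPoints_lambda x), (hcard.dvd_iff dvd_rfl).1 hpS⟩
      inter_subset_left).trans inter_subset_right
  have hsets := coe_zmultiples_eq_coe_zpowers ((hS.zpowers_subset hxS).trans hfix)
  refine ⟨_, _, hsets, ?_⟩
  rw [← hx, ← Nat.card_zpowers]
  exact Nat.card_congr (Equiv.setCongr hsets)
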